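/- Any solution (a,b) ∈ C¹[0,T] of the system da/dt = (Pa/t)(b-1/P), db/dt = (P/(2t))(1-b²) - (PQ/2)(1-a²) - Qb with a not identically zero satisfies b(t) > 0 for all t ∈ [0,T], and in particular b(0) = 1. -/

import Mathlib

/-- Metric coefficient `P(t) = √6·√(2t²+2)/√(2t²+3)`. -/
noncomputable def Pfun (t : ℝ) : ℝ := Real.sqrt 6 * Real.sqrt (2 * t ^ 2 + 2) / Real.sqrt (2 * t ^ 2 + 3)

/-- Metric coefficient `Q(t) = t/(t²+1)`. -/
noncomputable def Qfun (t : ℝ) : ℝ := t / (t ^ 2 + 1)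

/-- `(a,b)` solves the invariant Spin(7) instanton system on the set `s`. -/
def SolvesSpin7 (a b : ℝ → ℝ) (s : Set ℝ) : Prop :=
  ∀ t ∈ s,
    HasDerivAt a (Pfun t * a t / t * (b t - 1 / Pfun t)) t ∧
    HasDerivAt b
      (Pfun t / (2 * t) * (1 - (b t) ^ 2) - Pfun t * Qfun t / 2 * (1 - (a t) ^ 2) - Qfun t * b t) t

/-!
Write the `b`-equation as `b' = c / t + g` with `c = P (1 - b²) / 2` and `g` continuous on
`[0,T]`. Since `b'` is continuous on `[0,T]`, `c = t (b' - g)` extends continuously by `0` at `0`,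
so `1 - b(0)² = c(0) = 0`. If `b(0) = -1`, the `a`-equation reads `a' = p a / t` with
`p = P b - 1`, `p(0) = -3 < 0`; for `k = -p(0)` and `M` large, `t ^ k a² e^{-Mt}` is
nonincreasing and vanishes at `0`, so `a ≡ 0`. Hence `b(0) = 1`, and `b` cannot reach `0`: at a
first zero `t₀ > 0` we would have `b'(t₀) ≤ 0`, whereas the equation gives
`b'(t₀) = P / (2t₀) - P Q (1 - a²) / 2 > 0` because `t Q(t) < 1`.
-/

open Set

theorem apply_zero_eq_zero_of_hasDerivAt_div_add {f c g : ℝ → ℝ} {T : ℝ} (hT : 0 < T)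
    (hf : ContDiffOn ℝ 1 f (Icc 0 T)) (hc : ContinuousOn c (Icc 0 T))
    (hg : ContinuousOn g (Icc 0 T)) (hderiv : ∀ t ∈ Ioo 0 T, HasDerivAt f (c t / t + g t) t) :
    c 0 = 0 := by
  have hf' := hf.continuousOn_derivWithin (uniqueDiffOn_Icc hT) le_rfl
  have hc_eq : EqOn c (fun t ↦ t * (derivWithin f (Icc 0 T) t - g t)) (Ioo 0 T) := fun t ht ↦ by
    have hderiv_eq := (hderiv t ht).hasDerivWithinAt.derivWithin
      (uniqueDiffOn_Icc hT t (Ioo_subset_Icc_self ht))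
    simp only [hderiv_eq]
    field_simp [ht.1.ne']
    ring
  simpa using hc_eq.of_subset_closure hc (continuousOn_id.mul (hf'.sub hg)) Ioo_subset_Icc_self
    (closure_Ioo hT.ne).ge ⟨le_rfl, hT.le⟩

theorem ContinuousOn.exists_le_mul_of_apply_zero_neg {q : ℝ → ℝ} {T : ℝ}
    (hq : ContinuousOn q (Icc 0 T)) (hq0 : q 0 < 0) : ∃ M, ∀ t ∈ Icc 0 T, q t ≤ M * t := by
  rcases lt_or_ge T 0 with hT | hT
  · exact ⟨0, fun t ht ↦ absurd (ht.1.trans ht.2) hT.not_ge⟩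
  obtain ⟨δ, hδ, hneg⟩ : ∃ δ > 0, ∀ t ∈ Icc 0 T, t < δ → q t < 0 := by
    obtain ⟨δ, hδ, h⟩ := Metric.eventually_nhds_iff.mp
      (eventually_nhdsWithin_iff.mp ((hq 0 ⟨le_rfl, hT⟩).eventually_lt_const hq0))
    refine ⟨δ, hδ, fun t ht htδ ↦ h ?_ ht⟩
    rwa [Real.dist_0_eq_abs, abs_of_nonneg ht.1]
  obtain ⟨B, hB⟩ := isCompact_Icc.bddAbove_image hq
  refine ⟨max B 0 / δ, fun t ht ↦ ?_⟩
  rcases lt_or_ge t δ with htδ | htδ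
  · exact (hneg t ht htδ).le.trans (mul_nonneg (by positivity) ht.1)
  · calc q t ≤ max B 0 := (hB (mem_image_of_mem q ht)).trans (le_max_left _ _)
      _ = max B 0 / δ * δ := by field_simp
      _ ≤ max B 0 / δ * t := by gcongr

theorem eqOn_zero_of_hasDerivAt_mul_div {a p : ℝ → ℝ} {T : ℝ} (hT : 0 < T)
    (ha : ContinuousOn a (Icc 0 T)) (hp : ContinuousOn p (Icc 0 T)) (hp0 : p 0 < 0)
    (hderiv : ∀ t ∈ Ioo 0 T, HasDerivAt a (p t * a t / t) t) : EqOn a 0 (Icc 0 T) := by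
  set k := -p 0
  have hk : 0 < k := neg_pos.mpr hp0
  obtain ⟨M, hM⟩ := ContinuousOn.exists_le_mul_of_apply_zero_neg (q := fun t ↦ k + 2 * p t)
    (continuousOn_const.add (continuousOn_const.mul hp)) (by linarith)
  set h : ℝ → ℝ := fun t ↦ t ^ k * a t ^ 2 * Real.exp (-(M * t))
  have hh_deriv : ∀ t ∈ Ioo 0 T, HasDerivAt h
      (Real.exp (-(M * t)) * t ^ (k - 1) * a t ^ 2 * (k + 2 * p t - M * t)) t := by
    intro t ht
    have hpow := Real.hasDerivAt_rpow_const (p := k) (Or.inl ht.1.ne')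
    have hexp := ((hasDerivAt_id' t).const_mul M).fun_neg.exp
    refine ((hpow.fun_mul ((hderiv t ht).fun_pow 2)).fun_mul hexp).congr_deriv ?_
    have ht0 : t ≠ 0 := ht.1.ne'
    rw [Real.rpow_sub_one ht0]
    field_simp
    ring
  have hh_cont : ContinuousOn h (Icc 0 T) :=
    (((continuous_id.rpow_const fun _ ↦ Or.inr hk.le).continuousOn).mul (ha.pow 2)).mul
      (by fun_prop)
  have hh_anti : AntitoneOn h (Icc 0 T) := by
    refine antitoneOn_of_hasDerivWithinAt_nonpos (convex_Icc 0 T) hh_cont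
      (fun t ht ↦ (hh_deriv t (by rwa [interior_Icc] at ht)).hasDerivWithinAt) fun t ht ↦ ?_
    rw [interior_Icc] at ht
    have hfactor : k + 2 * p t - M * t ≤ 0 := by linarith [hM t (Ioo_subset_Icc_self ht)]
    have := Real.rpow_nonneg ht.1.le (k - 1)
    exact mul_nonpos_of_nonneg_of_nonpos (by positivity) hfactor
  have hh_zero : ∀ t ∈ Icc 0 T, h t = 0 := fun t ht ↦ by
    refine le_antisymm ?_ (by have := Real.rpow_nonneg ht.1 k; positivity)
    calc h t ≤ h 0 := hh_anti ⟨le_rfl, hT.le⟩ ht ht.1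
      _ = 0 := by simp [h, Real.zero_rpow hk.ne']
  have ha_zero : EqOn a 0 (Ioc 0 T) := fun t ht ↦ by
    simpa [h, (Real.rpow_pos_of_pos ht.1 k).ne', Real.exp_ne_zero] using
      hh_zero t (Ioc_subset_Icc_self ht)
  exact ha_zero.of_subset_closure ha continuousOn_const Ioc_subset_Icc_self (closure_Ioc hT.ne).ge

theorem HasDerivAt.nonpos_of_forall_Ioo_le {f : ℝ → ℝ} {f' x c : ℝ} (hf : HasDerivAt f f' x)
    (hc : c < x) (hle : ∀ y ∈ Ioo c x, f x ≤ f y) : f' ≤ 0 := by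
  refine le_of_tendsto ((hasDerivWithinAt_iff_tendsto_slope' (s := Iio x) (lt_irrefl x)).mp
    hf.hasDerivWithinAt) ?_
  filter_upwards [Ioo_mem_nhdsLT hc] with y hy
  rw [slope_def_field]
  exact div_nonpos_of_nonneg_of_nonpos (sub_nonneg.2 (hle y hy)) (sub_nonpos.2 hy.2.le)

theorem pos_of_hasDerivAt_pos_of_apply_eq_zero {f f' : ℝ → ℝ} {a c : ℝ}
    (hf : ContinuousOn f (Icc a c)) (ha : 0 < f a)
    (hf' : ∀ t ∈ Ioc a c, f t = 0 → HasDerivAt f (f' t) t)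
    (hpos : ∀ t ∈ Ioc a c, f t = 0 → 0 < f' t) : ∀ t ∈ Icc a c, 0 < f t := by
  by_contra! ⟨t₁, ht₁, hft₁⟩
  set S := Icc a c ∩ f ⁻¹' Iic 0
  have hS_bdd : BddBelow S := ⟨a, fun x hx ↦ hx.1.1⟩
  have ht₀ : sInf S ∈ S := (hf.preimage_isClosed_of_isClosed isClosed_Icc isClosed_Iic).csInf_mem
    ⟨t₁, ht₁, hft₁⟩ hS_bdd
  set t₀ := sInf S
  have hpos_before : ∀ s ∈ Ico a t₀, 0 < f s := fun s hs ↦ by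
    by_contra! hfs
    exact (csInf_le hS_bdd ⟨⟨hs.1, hs.2.le.trans ht₀.1.2⟩, hfs⟩).not_gt hs.2
  have hat₀ : a < t₀ := ht₀.1.1.lt_of_ne fun h ↦ (h ▸ ha).not_ge ht₀.2
  have hft₀ : f t₀ = 0 := by
    obtain ⟨s, hs, hfs⟩ := intermediate_value_Icc' ht₀.1.1 (hf.mono (Icc_subset_Icc_right ht₀.1.2))
      ⟨ht₀.2, ha.le⟩
    obtain rfl | hst := hs.2.eq_or_lt
    · exact hfs
    · exact absurd hfs (hpos_before s ⟨hs.1, hst⟩).ne'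
  have ht₀_mem : t₀ ∈ Ioc a c := ⟨hat₀, ht₀.1.2⟩
  refine (hpos t₀ ht₀_mem hft₀).not_ge ((hf' t₀ ht₀_mem hft₀).nonpos_of_forall_Ioo_le hat₀ ?_)
  exact fun y hy ↦ hft₀ ▸ (hpos_before y (Ioo_subset_Ico_self hy)).le

theorem Pfun_eq_sqrt (t : ℝ) : Pfun t = √((12 * t ^ 2 + 12) / (2 * t ^ 2 + 3)) := by
  rw [Pfun, ← Real.sqrt_mul (by norm_num), ← Real.sqrt_div (by positivity)]
  ring_nf

theorem Pfun_pos (t : ℝ) : 0 < Pfun t := by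
  rw [Pfun_eq_sqrt]
  positivity

theorem Pfun_zero : Pfun 0 = 2 := by
  rw [Pfun_eq_sqrt, Real.sqrt_eq_iff_mul_self_eq] <;> norm_num

theorem continuous_Pfun : Continuous Pfun :=
  (continuous_const.mul (by fun_prop)).div (by fun_prop)
    fun t ↦ (Real.sqrt_pos.mpr (by positivity)).ne'

theorem continuous_Qfun : Continuous Qfun :=
  continuous_id.div (by fun_prop) fun t ↦ by positivity

theorem Qfun_nonneg {t : ℝ} (ht : 0 ≤ t) : 0 ≤ Qfun t := div_nonneg ht (by positivity)

theorem Qfun_lt_inv {t : ℝ} (ht : 0 < t) : Qfun t < t⁻¹ := by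
  rw [Qfun, div_lt_iff₀ (by positivity)]
  field_simp
  linarith

theorem Pfun_mul_Qfun_mul_lt {t : ℝ} (ht : 0 < t) (x : ℝ) :
    Pfun t * Qfun t / 2 * (1 - x ^ 2) < Pfun t / (2 * t) := by
  have hP := Pfun_pos t
  calc Pfun t * Qfun t / 2 * (1 - x ^ 2) ≤ Pfun t * Qfun t / 2 := by
        nlinarith [mul_nonneg hP.le (Qfun_nonneg ht.le), sq_nonneg x]
    _ < Pfun t * t⁻¹ / 2 := by gcongr; exact Qfun_lt_inv ht
    _ = Pfun t / (2 * t) := by field_simp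

namespace SolvesSpin7

variable {a b : ℝ → ℝ} {T : ℝ}

theorem hasDerivAt_fst {s : Set ℝ} (h : SolvesSpin7 a b s) {t : ℝ} (ht : t ∈ s) :
    HasDerivAt a ((Pfun t * b t - 1) * a t / t) t :=
  (h t ht).1.congr_deriv (by field_simp [(Pfun_pos t).ne'])

theorem sq_apply_zero (h : SolvesSpin7 a b (Ioc 0 T)) (hT : 0 < T)
    (ha : ContinuousOn a (Icc 0 T)) (hb : ContDiffOn ℝ 1 b (Icc 0 T)) : b 0 ^ 2 = 1 := by
  have hP := continuous_Pfun.continuousOn (s := Icc 0 T)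
  have hQ := continuous_Qfun.continuousOn (s := Icc 0 T)
  have hb' := hb.continuousOn
  have := apply_zero_eq_zero_of_hasDerivAt_div_add hT hb
    (c := fun t ↦ Pfun t / 2 * (1 - b t ^ 2))
    (g := fun t ↦ -(Pfun t * Qfun t / 2 * (1 - a t ^ 2)) - Qfun t * b t)
    (by fun_prop) (by fun_prop) fun t ht ↦ (h t (Ioo_subset_Ioc_self ht)).2.congr_deriv (by ring)
  simp only [Pfun_zero] at this
  linarith

theorem eqOn_zero_of_apply_zero_eq_neg_one (h : SolvesSpin7 a b (Ioc 0 T)) (hT : 0 < T)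
    (ha : ContinuousOn a (Icc 0 T)) (hb : ContinuousOn b (Icc 0 T)) (hb0 : b 0 = -1) :
    EqOn a 0 (Icc 0 T) :=
  eqOn_zero_of_hasDerivAt_mul_div hT ha
    ((continuous_Pfun.continuousOn.mul hb).sub continuousOn_const)
    (by norm_num [Pfun_zero, hb0]) fun t ht ↦ h.hasDerivAt_fst (Ioo_subset_Ioc_self ht)

end SolvesSpin7

/-- A `C¹` solution `(a,b)` on `[0,T]` of the invariant Spin(7) instanton system with `a` not
identically zero satisfies `b > 0` on `[0,T]`, and in particular `b(0) = 1`. -/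
theorem spin7_b_positive (a b : ℝ → ℝ) (T : ℝ) (hT : 0 < T)
    (ha : ContDiffOn ℝ 1 a (Set.Icc 0 T)) (hb : ContDiffOn ℝ 1 b (Set.Icc 0 T))
    (hsol : SolvesSpin7 a b (Set.Ioc 0 T))
    (hanz : ∃ t ∈ Set.Icc (0 : ℝ) T, a t ≠ 0) :
    (∀ t ∈ Set.Icc (0 : ℝ) T, 0 < b t) ∧ b 0 = 1 := by
  have hb0 : b 0 = 1 := by
    refine (sq_eq_one_iff.mp (hsol.sq_apply_zero hT ha.continuousOn hb)).resolve_right fun hb0 ↦ ?_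
    obtain ⟨t, ht, hat⟩ := hanz
    exact hat (hsol.eqOn_zero_of_apply_zero_eq_neg_one hT ha.continuousOn hb.continuousOn hb0 ht)
  refine ⟨pos_of_hasDerivAt_pos_of_apply_eq_zero hb.continuousOn (hb0 ▸ one_pos)
    (fun t ht _ ↦ (hsol t ht).2) fun t ht hbt ↦ ?_, hb0⟩
  simp only [hbt]
  linarith [Pfun_mul_Qfun_mul_lt ht.1 (a t)]
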